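/- arXiv:2602.16998 — 3 statements merged into one kernel-verified Lean document; each statement's English description precedes it below -/
import Mathlib

section
/- Let w, w' be vectors in R^d, each having at least one strictly positive and one strictly negative component. If for every x in the nonnegative orthant R^ד_{≥0}, the sign of ⟨x, w⟩ equals the sign of ⟨x, w'⟩, then there exists λ > 0 such that w' = λ·w. -/
theorem stmt0 (d : ℕ) (w w' : Fin d → ℝ)
    (hw_pos : ∃ i, 0 < w i) (hw_neg : ∃ i, w i < 0)
    (hw'_pos : ∃ i, 0 < w' i) (hw'_neg : ∃ i, w' i < 0)
    (hsign : ∀ x : Fin d → ℝ, (∀ i, 0 ≤ x i) →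
      Real.sign (∑ i, x i * w i) = Real.sign (∑ i, x i * w' i)) :
    ∃ lam : ℝ, 0 < lam ∧ w' = lam • w := by
  obtain ⟨i0, hi0⟩ := hw_pos
  obtain ⟨j0, hj0⟩ := hw_neg
  have hcoord : ∀ i, Real.sign (w i) = Real.sign (w' i) := by
    intro i
    have h := hsign (fun k => if k = i then 1 else 0)
      (by intro k; split <;> norm_num)
    simpa [ite_mul, Finset.sum_ite_eq'] using h
  have hpos : ∀ i, 0 < w i → 0 < w' i := by
    intro i hi
    have := hcoord i
    rw [Real.sign_of_pos hi] at this
    by_contra h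
    push_neg at h
    rcases lt_or_eq_of_le h with h' | h'
    · rw [Real.sign_of_neg h'] at this; norm_num at this
    · rw [h', Real.sign_zero] at this; norm_num at this
  have hneg : ∀ i, w i < 0 → w' i < 0 := by
    intro i hi
    have := hcoord i
    rw [Real.sign_of_neg hi] at this
    by_contra h
    push_neg at h
    rcases lt_or_eq_of_le h with h' | h'
    · rw [Real.sign_of_pos h'] at this; norm_num at this
    · rw [← h', Real.sign_zero] at this; norm_num at this
  have hzero : ∀ i, w i = 0 → w' i = 0 := by
    intro i hi
    have := hcoord i
    rw [hi, Real.sign_zero] at this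
    exact (Real.sign_eq_zero_iff).mp this.symm
  have hpair : ∀ i j, 0 < w i → w j < 0 → -w j * w' i + w i * w' j = 0 := by
    intro i j hi hj
    have h := hsign (fun k => (if k = i then -w j else 0) + (if k = j then w i else 0))
      (by
        intro k
        have h1 : (0:ℝ) ≤ if k = i then -w j else 0 := by split <;> linarith
        have h2 : (0:ℝ) ≤ if k = j then w i else 0 := by split <;> linarith
        linarith)
    have hs : ∀ v : Fin d → ℝ,
        (∑ k, ((if k = i then -w j else 0) + (if k = j then w i else 0)) * v k)
          = -w j * v i + w i * v j := by
      intro v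
      simp [add_mul, Finset.sum_add_distrib, ite_mul, Finset.sum_ite_eq']
    rw [hs, hs] at h
    have h0 : -w j * w i + w i * w j = 0 := by ring
    rw [h0, Real.sign_zero] at h
    exact (Real.sign_eq_zero_iff).mp h.symm
  have hwi0' := hpos i0 hi0
  have hwj0' := hneg j0 hj0
  refine ⟨w' i0 / w i0, div_pos hwi0' hi0, ?_⟩
  funext j
  have hne0 : w i0 ≠ 0 := ne_of_gt hi0
  have hne1 : w j0 ≠ 0 := ne_of_lt hj0
  simp only [Pi.smul_apply, smul_eq_mul]
  rcases lt_trichotomy (w j) 0 with hj | hj | hj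
  · have h := hpair i0 j hi0 hj
    field_simp
    linarith [h]
  · rw [hzero j hj, hj, mul_zero]
  · have h1 := hpair j j0 hj hj0
    have h2 := hpair i0 j0 hi0 hj0
    field_simp
    nlinarith [h1, h2]
end

section
/- Let w, w' ∈ R^d have the same sign pattern, and let i, j be indices with w_i > 0 and w_j < 0. Suppose for all t ≥ 0, sign(w_i + t·w_j) = sign(w'_i + t·w'_j). Then w'_i / w_i = w'_j / w_j. -/
/-! The sign condition at the root `t₀ = -w i / w j ≥ 0` of `t ↦ w i + t * w j` forces
`t ↦ w' i + t * w' j` to vanish there too, and two lines with a common root and nonzero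
intercepts have proportional coefficients. -/

theorem div_eq_div_of_add_mul_eq_zero {a b a' b' t : ℝ} (ha : a ≠ 0) (hb : b ≠ 0)
    (ht : a + t * b = 0) (ht' : a' + t * b' = 0) : a' / a = b' / b := by
  rw [div_eq_div_iff ha hb]
  linear_combination b * ht' - b' * ht

theorem stmt3_general (d : ℕ) (w w' : Fin d → ℝ)
    (i j : Fin d) (hi : 0 < w i) (hj : w j < 0)
    (hsign : ∀ t : ℝ, 0 ≤ t →
      Real.sign (w i + t * w j) = Real.sign (w' i + t * w' j)) :
    w' i / w i = w' j / w j := by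
  set t₀ := -w i / w j
  have ht₀ : w i + t₀ * w j = 0 := by
    rw [div_mul_cancel₀ _ hj.ne]
    ring
  have ht₀' : w' i + t₀ * w' j = 0 := by
    have h := hsign t₀ (div_nonneg_of_nonpos (neg_nonpos.2 hi.le) hj.le)
    rwa [ht₀, Real.sign_zero, eq_comm, Real.sign_eq_zero_iff] at h
  exact div_eq_div_of_add_mul_eq_zero hi.ne' hj.ne ht₀ ht₀'

theorem stmt3 (d : ℕ) (w w' : Fin d → ℝ)
    (hpat : ∀ k, (0 < w k ↔ 0 < w' k) ∧ (w k < 0 ↔ w' k < 0))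
    (i j : Fin d) (hi : 0 < w i) (hj : w j < 0)
    (hsign : ∀ t : ℝ, 0 ≤ t →
      Real.sign (w i + t * w j) = Real.sign (w' i + t * w' j)) :
    w' i / w i = w' j / w j :=
  stmt3_general d w w' i j hi hj hsign
end

section
/- Let P ⊂ R^d be a polytope, C ⊂ R^d a closed full-dimensional convex cone with polar cone C°, and suppose every extreme point v of P is exposed by some y in the interior of C, meaning argmax_{x ∈ P} ⟨y, x⟩ = {v}. Then the extreme points of P + C° are exactly the extreme points of P. -/
/-!
Adding a cone `K` creates no new extreme points: a point `p + k` with `0 ≠ k ∈ K` is the midpoint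
of `p` and `p + 2k`. Conversely, if `y ∈ interior C` exposes the vertex `v` of `P`, then `⟪y, ·⟫`
is strictly negative on `C° \ {0}`, so it attains its maximum over `P + C°` only at `v + 0`; thus
`v` is an exposed, hence extreme, point of `P + C°`.
-/

open Pointwise Set Filter Topology

open RealInnerProductSpace

section Cone

variable {𝕜 E : Type*} [Field 𝕜] [LinearOrder 𝕜] [IsStrictOrderedRing 𝕜]
  [AddCommGroup E] [Module 𝕜 E] {P K : Set E}

theorem eq_zero_of_add_mem_extremePoints_add (hK : ∀ k ∈ K, ∀ t : 𝕜, 0 ≤ t → t • k ∈ K)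
    {p k : E} (hp : p ∈ P) (hk : k ∈ K) (hpk : p + k ∈ (P + K).extremePoints 𝕜) : k = 0 := by
  have hmem (t : 𝕜) (ht : 0 ≤ t) : p + t • k ∈ P + K := add_mem_add hp (hK k hk t ht)
  have hmid : p + k ∈ openSegment 𝕜 (p + (0 : 𝕜) • k) (p + (2 : 𝕜) • k) :=
    ⟨1 / 2, 1 / 2, by norm_num, by norm_num, by norm_num, by module⟩
  simpa using hpk.2 (hmem 0 le_rfl) (hmem 2 zero_le_two) hmid

theorem extremePoints_add_subset (hK : ∀ k ∈ K, ∀ t : 𝕜, 0 ≤ t → t • k ∈ K) :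
    (P + K).extremePoints 𝕜 ⊆ P.extremePoints 𝕜 := by
  rintro _ hv
  obtain ⟨p, hp, k, hk, rfl⟩ := hv.1
  obtain rfl := eq_zero_of_add_mem_extremePoints_add hK hp hk hv
  have hPK : P ⊆ P + K := fun q hq => by simpa using add_mem_add hq hk
  exact inter_extremePoints_subset_extremePoints_of_subset hPK ⟨by simpa using hp, hv⟩

variable [TopologicalSpace 𝕜] [TopologicalSpace E]

theorem ContinuousLinearMap.toExposed_add_eq_singleton {l : StrongDual 𝕜 E} {v : E}
    (hv : l.toExposed P = {v}) (h0 : 0 ∈ K) (hneg : ∀ k ∈ K, k ≠ 0 → l k < 0) :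
    l.toExposed (P + K) = {v} := by
  have hvP : v ∈ l.toExposed P := hv.symm ▸ rfl
  have hle : ∀ k ∈ K, l k ≤ 0 := fun k hk => by
    rcases eq_or_ne k 0 with rfl | hk0
    · simp
    · exact (hneg k hk hk0).le
  have hbound : ∀ z ∈ P + K, l z ≤ l v := by
    rintro _ ⟨p, hp, k, hk, rfl⟩
    rw [map_add]
    linarith [hvP.2 p hp, hle k hk]
  have hvPK : v ∈ P + K := by simpa using add_mem_add hvP.1 h0
  ext x
  refine ⟨?_, fun hx => hx ▸ ⟨hvPK, hbound⟩⟩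
  rintro ⟨⟨p, hp, k, hk, rfl⟩, hmax⟩
  have hlv : l v ≤ l (p + k) := hmax v hvPK
  rw [map_add] at hlv
  have hk0 : k = 0 := by
    by_contra hk0
    linarith [hvP.2 p hp, hneg k hk hk0]
  subst hk0
  rw [map_zero, add_zero] at hlv
  have hpv : p ∈ l.toExposed P := ⟨hp, fun z hz => (hvP.2 z hz).trans hlv⟩
  simpa [hv] using hpv

end Cone

section Polar

variable {E : Type*} [NormedAddCommGroup E] [InnerProductSpace ℝ E] {C : Set E} {y k : E}

def polarCone (C : Set E) : Set E :=
  {k | ∀ y ∈ C, ⟪y, k⟫ ≤ 0}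

theorem smul_mem_polarCone (hk : k ∈ polarCone C) {t : ℝ} (ht : 0 ≤ t) : t • k ∈ polarCone C :=
  fun y hy => by simpa [real_inner_smul_right] using mul_nonpos_of_nonneg_of_nonpos ht (hk y hy)

theorem zero_mem_polarCone : (0 : E) ∈ polarCone C :=
  fun y _ => (inner_zero_right y).le

/-- `y + t • k ∈ C` for some `t > 0`, whence `⟪y, k⟫ ≤ -t ‖k‖² < 0`. -/
theorem inner_neg_of_mem_interior_of_mem_polarCone (hy : y ∈ interior C) (hk : k ∈ polarCone C) (hk0 : k ≠ 0) :
    ⟪y, k⟫ < 0 := by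
  have hnear : ∀ᶠ t : ℝ in 𝓝 0, y + t • k ∈ C := by
    have hcont : Continuous fun t : ℝ => y + t • k := by fun_prop
    exact hcont.tendsto' 0 y (by simp) |>.eventually (mem_interior_iff_mem_nhds.1 hy)
  obtain ⟨t, htC, ht⟩ :=
    ((hnear.filter_mono (nhdsWithin_le_nhds (s := Ioi 0))).and self_mem_nhdsWithin).exists
  have hkk : 0 < ⟪k, k⟫ := real_inner_self_pos.2 hk0
  have := hk _ htC
  rw [inner_add_left, real_inner_smul_left] at this
  nlinarith [mul_pos (show (0 : ℝ) < t from ht) hkk]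

theorem extremePoints_add_polarCone {P : Set E}
    (hexp : ∀ v ∈ P.extremePoints ℝ, ∃ y ∈ interior C, (innerSL ℝ y).toExposed P = {v}) :
    (P + polarCone C).extremePoints ℝ = P.extremePoints ℝ := by
  refine (extremePoints_add_subset fun k hk t ht => smul_mem_polarCone hk ht).antisymm
    fun v hv => ?_
  obtain ⟨y, hy, hface⟩ := hexp v hv
  have hface' : (innerSL ℝ y).toExposed (P + polarCone C) = {v} :=
    ContinuousLinearMap.toExposed_add_eq_singleton hface zero_mem_polarCone
      fun k hk hk0 => inner_neg_of_mem_interior_of_mem_polarCone hy hk hk0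
  exact exposedPoints_subset_extremePoints <|
    mem_exposedPoints_iff_exposed_singleton.2 (hface' ▸ ContinuousLinearMap.toExposed.isExposed)

end Polar

theorem stmt7_general (d : ℕ)
    (C : Set (EuclideanSpace ℝ (Fin d)))
    (P : Set (EuclideanSpace ℝ (Fin d)))
    (Cpol : Set (EuclideanSpace ℝ (Fin d)))
    (hCpol : Cpol = {k | ∀ y ∈ C, ⟪y, k⟫ ≤ (0:ℝ)})
    (hexp : ∀ v ∈ Set.extremePoints ℝ P, ∃ y ∈ interior C,
      {x ∈ P | ∀ z ∈ P, ⟪y, z⟫ ≤ ⟪y, x⟫} = {v}) :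
    Set.extremePoints ℝ (P + Cpol) = Set.extremePoints ℝ P := by
  obtain rfl : Cpol = polarCone C := hCpol
  exact extremePoints_add_polarCone hexp

theorem stmt7 (d : ℕ) (V : Finset (EuclideanSpace ℝ (Fin d)))
    (C : Set (EuclideanSpace ℝ (Fin d)))
    (hCclosed : IsClosed C) (hCconv : Convex ℝ C)
    (hCcone : ∀ y ∈ C, ∀ r : ℝ, 0 ≤ r → r • y ∈ C)
    (hfull : (interior C).Nonempty)
    (P : Set (EuclideanSpace ℝ (Fin d)))
    (hP : P = convexHull ℝ (V : Set (EuclideanSpace ℝ (Fin d))))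
    (Cpol : Set (EuclideanSpace ℝ (Fin d)))
    (hCpol : Cpol = {k | ∀ y ∈ C, ⟪y, k⟫ ≤ (0:ℝ)})
    (hexp : ∀ v ∈ Set.extremePoints ℝ P, ∃ y ∈ interior C,
      {x ∈ P | ∀ z ∈ P, ⟪y, z⟫ ≤ ⟪y, x⟫} = {v}) :
    Set.extremePoints ℝ (P + Cpol) = Set.extremePoints ℝ P :=
  stmt7_general d C P Cpol hCpol hexp
end
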